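/- arXiv:1511.00936 — 9 statements merged into one kernel-verified Lean document; each statement's English description precedes it below -/
import Mathlib

section
/- The linear operator P on Ш_k(k) defined by P(a_m) = a_{m+1} satisfies the Rota-Baxter identity of weight λ on basis elements: P(a_m) ⋄ P(a_n) = P(a_m ⋄ P(a_n)) + P(P(a_m) ⋄ a_n) + λ P(a_m ⋄ a_n) for all m, n ∈ ℕ. -/
open Finsupp

/-- The basis element `a_m` of the free Rota-Baxter algebra `Ш_k(k)`. -/
noncomputable def aElt {k : Type*} [CommRing k] (m : ℕ) : ℕ →₀ k := Finsupp.single m 1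

/-- The product `⋄` of weight `l` on `Ш_k(k)`, defined on basis elements by
`a_m ⋄ a_n = Σ_{i=0}^{min(m,n)} C(m+n−i,m) C(m,i) l^i a_{m+n−i}` and extended bilinearly. -/
noncomputable def diamond {k : Type*} [CommRing k] (l : k) (f g : ℕ →₀ k) : ℕ →₀ k :=
  f.sum fun m cm => g.sum fun n cn =>
    ∑ i ∈ Finset.range (min m n + 1),
      Finsupp.single (m + n - i) (cm * cn * ((m + n - i).choose m : k) * ((m.choose i : k)) * l ^ i)

/-- The Rota-Baxter operator `P (a_m) = a_{m+1}` on `Ш_k(k)`. -/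
noncomputable def RBop {k : Type*} [CommRing k] (f : ℕ →₀ k) : ℕ →₀ k :=
  Finsupp.mapDomain (· + 1) f

/-- A Rota-Baxter ideal of `Ш_k(k)` of weight `l`: a `k`-submodule that is an ideal
for `⋄` and closed under `P`. -/
def IsRBIdeal {k : Type*} [CommRing k] (l : k) (I : Submodule k (ℕ →₀ k)) : Prop :=
  (∀ f g : ℕ →₀ k, g ∈ I → diamond l f g ∈ I) ∧ (∀ f ∈ I, RBop f ∈ I)

/-- The Rota-Baxter ideal of `Ш_k(k)` generated by a set `S`. -/
noncomputable def RBspan {k : Type*} [CommRing k] (l : k) (S : Set (ℕ →₀ k)) :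
    Submodule k (ℕ →₀ k) :=
  sInf {J : Submodule k (ℕ →₀ k) | IsRBIdeal l J ∧ S ⊆ J}

/-- The coefficient ideal `Ω_j(I)`: coefficients at `a_j` of elements of `I`
supported in degrees `≤ j`. -/
def Omega {k : Type*} [CommRing k] (I : Set (ℕ →₀ k)) (j : ℕ) : Set k :=
  {b | ∃ f ∈ I, (∀ i, j < i → f i = 0) ∧ f j = b}

/-- The set of initial terms of nonzero elements of `I`. -/
def initialSet {k : Type*} [CommRing k] (I : Set (ℕ →₀ k)) : Set (ℕ →₀ k) :=
  {g | ∃ f ∈ I, ∃ n : ℕ, (∀ i, n < i → f i = 0) ∧ f n ≠ 0 ∧ g = Finsupp.single n (f n)}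


lemma diamond_single {k : Type*} [CommRing k] (l : k) (m n : ℕ) :
    diamond l (Finsupp.single m (1:k)) (Finsupp.single n 1) =
      ∑ i ∈ Finset.range (min m n + 1),
        Finsupp.single (m + n - i) (((m + n - i).choose m : k) * (m.choose i : k) * l ^ i) := by
  unfold diamond
  rw [Finsupp.sum_single_index, Finsupp.sum_single_index] <;> simp

lemma choose_id (a m j : ℕ) :
    (a+1).choose (m+1) * (m+1).choose (j+1)
      = a.choose m * m.choose (j+1) + a.choose (m+1) * (m+1).choose (j+1)
        + a.choose m * m.choose j := by
  rw [Nat.choose_succ_succ a m, Nat.choose_succ_succ m j]; ring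

private theorem rb_identity_basis_aux {k : Type*} [CommRing k] (l : k) (m n : ℕ) :
    diamond l (Finsupp.mapDomain (· + 1) (Finsupp.single m (1:k)))
      (Finsupp.mapDomain (· + 1) (Finsupp.single n 1)) =
      Finsupp.mapDomain (· + 1) (diamond l (Finsupp.single m 1)
        (Finsupp.mapDomain (· + 1) (Finsupp.single n 1))) +
      Finsupp.mapDomain (· + 1) (diamond l (Finsupp.mapDomain (· + 1) (Finsupp.single m (1:k)))
        (Finsupp.single n 1)) +
      l • Finsupp.mapDomain (· + 1) (diamond l (Finsupp.single m 1) (Finsupp.single n 1)) := by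
  simp only [Finsupp.mapDomain_single]
  rw [diamond_single, diamond_single, diamond_single, diamond_single,
    Finsupp.mapDomain_finset_sum, Finsupp.mapDomain_finset_sum, Finsupp.mapDomain_finset_sum]
  simp only [Finsupp.mapDomain_single, Finset.smul_sum, Finsupp.smul_single, smul_eq_mul]
  have h1 : (∑ j ∈ Finset.range (min m (n+1) + 1),
      Finsupp.single (m + (n+1) - j + 1) (((m + (n+1) - j).choose m : k) * (m.choose j) * l ^ j))
      = ∑ j ∈ Finset.range (min m n + 2),
        Finsupp.single (m + n + 2 - j) (((m + n + 1 - j).choose m : k) * (m.choose j) * l ^ j) := by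
    rw [Finset.sum_subset (Finset.range_subset_range.2 (show min m (n+1) + 1 ≤ min m n + 2 by omega))]
    · apply Finset.sum_congr rfl
      intro j hj
      simp only [Finset.mem_range] at hj
      rw [show m + (n+1) - j = m + n + 1 - j from by omega,
        show m + n + 1 - j + 1 = m + n + 2 - j from by omega]
    · intro j hj1 hj
      simp only [Finset.mem_range] at hj hj1
      rw [Nat.choose_eq_zero_of_lt (show m < j by omega)]
      simp
  have h2 : (∑ j ∈ Finset.range (min (m+1) n + 1),
      Finsupp.single (m + 1 + n - j + 1) (((m + 1 + n - j).choose (m+1) : k) * ((m+1).choose j) * l ^ j))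
      = ∑ j ∈ Finset.range (min m n + 2),
        Finsupp.single (m + n + 2 - j) (((m + n + 1 - j).choose (m+1) : k) * ((m+1).choose j) * l ^ j) := by
    rw [Finset.sum_subset (Finset.range_subset_range.2 (show min (m+1) n + 1 ≤ min m n + 2 by omega))]
    · apply Finset.sum_congr rfl
      intro j hj
      simp only [Finset.mem_range] at hj
      rw [show m + 1 + n - j = m + n + 1 - j from by omega,
        show m + n + 1 - j + 1 = m + n + 2 - j from by omega]
    · intro j hj1 hj
      simp only [Finset.mem_range] at hj hj1
      rw [Nat.choose_eq_zero_of_lt (show m + 1 + n - j < m + 1 by omega)]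
      simp
  have h3 : (∑ j ∈ Finset.range (min m n + 1),
      Finsupp.single (m + n - j + 1) (l * (((m + n - j).choose m : k) * (m.choose j) * l ^ j)))
      = ∑ j ∈ Finset.range (min m n + 2),
        (if j = 0 then 0 else
          Finsupp.single (m + n + 2 - j) (((m + n + 1 - j).choose m : k) * (m.choose (j-1)) * l ^ j)) := by
    conv_rhs => rw [Finset.sum_range_succ']
    rw [if_pos rfl, add_zero]
    apply Finset.sum_congr rfl
    intro j hj
    simp only [Finset.mem_range] at hj
    rw [if_neg (Nat.succ_ne_zero j)]
    rw [show m + n + 2 - (j+1) = m + n - j + 1 from by omega,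
      show m + n + 1 - (j+1) = m + n - j from by omega, Nat.succ_sub_one]
    congr 1
    ring
  rw [h1, h2, h3, ← Finset.sum_add_distrib, ← Finset.sum_add_distrib]
  apply Finset.sum_congr (by rw [show min (m+1) (n+1) + 1 = min m n + 2 from by omega])
  intro j hj
  simp only [Finset.mem_range] at hj
  rcases j with _ | j'
  · rw [if_pos rfl, add_zero]
    simp only [Nat.sub_zero, Nat.choose_zero_right, Nat.cast_one, mul_one, pow_zero]
    rw [show m + 1 + (n + 1) = m + n + 2 from by omega, ← Finsupp.single_add]
    congr 1
    have h0 : (m+n+2).choose (m+1) = (m+n+1).choose m + (m+n+1).choose (m+1) := by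
      rw [show m+n+2 = (m+n+1)+1 from rfl]
      exact Nat.choose_succ_succ _ _
    rw [h0]
    push_cast
    ring
  · rw [if_neg (Nat.succ_ne_zero j'), Nat.succ_sub_one]
    rw [show m + 1 + (n + 1) - (j'+1) = (m + n + 1 - (j'+1)) + 1 from by omega,
      show m + n + 2 - (j'+1) = (m + n + 1 - (j'+1)) + 1 from by omega]
    set a := m + n + 1 - (j'+1)
    rw [← Finsupp.single_add, ← Finsupp.single_add]
    congr 1
    have hc : (((a+1).choose (m+1) : k)) * ((m+1).choose (j'+1))
        = (a.choose m : k) * (m.choose (j'+1)) + (a.choose (m+1) : k) * ((m+1).choose (j'+1))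
          + (a.choose m : k) * (m.choose j') := by
      exact_mod_cast congrArg (Nat.cast (R := k)) (choose_id a m j')
    calc ((a+1).choose (m+1) : k) * ((m+1).choose (j'+1)) * l ^ (j'+1)
        = (((a+1).choose (m+1) : k) * ((m+1).choose (j'+1))) * l ^ (j'+1) := by ring
      _ = _ := by rw [hc]; ring


/-- The operator `P(a_m) = a_{m+1}` satisfies the Rota-Baxter identity of weight `l`
on basis elements:
`P(a_m) ⋄ P(a_n) = P(a_m ⋄ P(a_n)) + P(P(a_m) ⋄ a_n) + l • P(a_m ⋄ a_n)`. -/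
theorem rb_identity_basis {k : Type*} [CommRing k] (l : k) (m n : ℕ) :
    diamond l (RBop (aElt m : ℕ →₀ k)) (RBop (aElt n)) =
      RBop (diamond l (aElt m) (RBop (aElt n))) +
      RBop (diamond l (RBop (aElt m)) (aElt n)) +
      l • RBop (diamond l (aElt m) (aElt n)) := by
  simp only [aElt, RBop]
  exact rb_identity_basis_aux l m n
end

section
/- In a Rota-Baxter k-algebra (R, P) of weight λ, the Rota-Baxter ideal generated by a subset S equals the ordinary ideal of R generated by the set S_RB := ∪_{m ∈ ℕ} { P(x_m P(x_{m−1} P(⋯ P(x_1 a)))) | a ∈ S, x_1, …, x_m ∈ R } (with the m = 0 case being a itself). -/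
open Finsupp

/-- `iterP P [x_m, ..., x_1] a = P(x_m P(x_{m-1} P( ... P(x_1 a))))`. -/
def iterP {R : Type*} [CommRing R] (P : R → R) : List R → R → R
  | [], a => a
  | x :: xs, a => P (x * iterP P xs a)

/-- In a Rota-Baxter `k`-algebra `(R, P)` of weight `l`, the Rota-Baxter ideal
generated by a subset `S` (the smallest ideal containing `S` and closed under `P`)
equals the ordinary ideal generated by
`S_RB = { P(x_m P(x_{m-1} P( ... P(x_1 a)))) | a ∈ S, x_i ∈ R, m ∈ ℕ }`. -/
theorem rb_ideal_span_eq {k R : Type*} [CommRing k] [CommRing R] [Algebra k R] (l : k)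
    (P : R →ₗ[k] R)
    (hP : ∀ x y : R, P x * P y = P (x * P y) + P (P x * y) + l • P (x * y))
    (S : Set R) :
    S ⊆ (Ideal.span {y : R | ∃ (xs : List R) (a : R), a ∈ S ∧ y = iterP P xs a} : Set R)
    ∧ (∀ x ∈ Ideal.span {y : R | ∃ (xs : List R) (a : R), a ∈ S ∧ y = iterP P xs a},
        P x ∈ Ideal.span {y : R | ∃ (xs : List R) (a : R), a ∈ S ∧ y = iterP P xs a})
    ∧ ∀ J : Ideal R, S ⊆ J → (∀ x ∈ J, P x ∈ J) →
        Ideal.span {y : R | ∃ (xs : List R) (a : R), a ∈ S ∧ y = iterP P xs a} ≤ J := by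
  set T : Set R := {y : R | ∃ (xs : List R) (a : R), a ∈ S ∧ y = iterP P xs a} with hT
  have hST : S ⊆ (Ideal.span T : Set R) := by
    intro a ha
    exact Ideal.subset_span ⟨[], a, ha, rfl⟩
  refine ⟨hST, ?_, ?_⟩
  · intro x hx
    have key : ∀ x ∈ Ideal.span T, ∀ r : R, P (r * x) ∈ Ideal.span T := by
      intro x hx
      refine Submodule.span_induction ?_ ?_ ?_ ?_ hx
      · rintro y ⟨xs, a, ha, rfl⟩ r
        exact Ideal.subset_span ⟨r :: xs, a, ha, rfl⟩
      · intro r; simpa using (Ideal.span T).zero_mem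
      · intro u v _ _ hu hv r
        have : r * (u + v) = r * u + r * v := by ring
        rw [this, map_add]
        exact (Ideal.span T).add_mem (hu r) (hv r)
      · intro s u _ hu r
        have : r * (s • u) = (r * s) * u := by
          simp [smul_eq_mul]; ring
        rw [this]
        exact hu (r * s)
    have := key x hx 1
    simpa using this
  · intro J hSJ hPJ
    rw [Ideal.span_le]
    rintro y ⟨xs, a, ha, rfl⟩
    induction xs with
    | nil => exact hSJ ha
    | cons x xs ih => exact hPJ _ (J.mul_mem_left x ih)
end

section
/- A Rota-Baxter ideal I of Ш_k(k) is generated as a Rota-Baxter ideal by a set of homogeneous elements (elements of the form c·a_i) if and only if I is a homogeneous ideal, i.e., for every f ∈ I, each homogeneous component of f lies in I. -/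
/-!
The elements all of whose homogeneous components lie in a Rota-Baxter ideal `I` form the largest
homogeneous submodule of `I`, and it is again a Rota-Baxter ideal: `P` shifts degrees up, and the
degree-`j` part of `f ⋄ g` is a `k`-combination of components `g n` with `n ≤ j`, each of which
can be raised to degree `j` by applying `P`. So a Rota-Baxter ideal generated by homogeneous
elements is homogeneous; conversely a homogeneous one is generated by its homogeneous elements.
-/

open Finsupp

noncomputable def homogeneousCore {k : Type*} [CommRing k] (I : Submodule k (ℕ →₀ k)) :
    Submodule k (ℕ →₀ k) where
  carrier := {f | ∀ i, single i (f i) ∈ I}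
  add_mem' hf hg i := by
    rw [Finsupp.add_apply, single_add]
    exact I.add_mem (hf i) (hg i)
  zero_mem' i := by simp
  smul_mem' c f hf i := by
    rw [Finsupp.smul_apply, smul_eq_mul, ← smul_single']
    exact I.smul_mem c (hf i)

section

variable {k : Type*} [CommRing k] {I : Submodule k (ℕ →₀ k)}

theorem single_mem_homogeneousCore {n : ℕ} {c : k} :
    single n c ∈ homogeneousCore I ↔ single n c ∈ I := by
  refine ⟨fun h => by simpa using h n, fun h i => ?_⟩
  rcases eq_or_ne n i with rfl | hne
  · simpa using h
  · simp [single_eq_of_ne' hne]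

theorem homogeneousCore_le : homogeneousCore I ≤ I := fun f hf => by
  rw [← sum_single f]
  exact Submodule.finsuppSum_mem _ _ _ _ fun i _ => hf i

end

theorem RBop_single {k : Type*} [CommRing k] (n : ℕ) (c : k) :
    RBop (single n c) = single (n + 1) c :=
  mapDomain_single

namespace IsRBIdeal

variable {k : Type*} [CommRing k] {l : k} {I : Submodule k (ℕ →₀ k)}

theorem single_mem_of_le (hI : IsRBIdeal l I) {n j : ℕ} (hnj : n ≤ j) {c : k}
    (h : single n c ∈ I) : single j c ∈ I := by
  induction j, hnj using Nat.le_induction with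
  | base => exact h
  | succ j _ ih => simpa only [RBop_single] using hI.2 _ ih

theorem diamond_mem_homogeneousCore (hI : IsRBIdeal l I) (f : ℕ →₀ k) {g : ℕ →₀ k}
    (hg : g ∈ homogeneousCore I) : diamond l f g ∈ homogeneousCore I := by
  refine Submodule.finsuppSum_mem _ _ _ _ fun m _ => Submodule.finsuppSum_mem _ _ _ _
    fun n _ => Submodule.sum_mem _ fun i hi => ?_
  have hin : i ≤ m := by
    have := Finset.mem_range.mp hi
    omega
  rw [single_mem_homogeneousCore,
    show f m * g n * ((m + n - i).choose m : k) * (m.choose i : k) * l ^ i =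
      (f m * ((m + n - i).choose m : k) * (m.choose i : k) * l ^ i) * g n by ring,
    ← smul_single']
  exact I.smul_mem _ (hI.single_mem_of_le (by omega) (hg n))

theorem RBop_mem_homogeneousCore (hI : IsRBIdeal l I) {f : ℕ →₀ k}
    (hf : f ∈ homogeneousCore I) : RBop f ∈ homogeneousCore I := by
  refine Submodule.finsuppSum_mem _ _ _ _ fun n _ => ?_
  rw [single_mem_homogeneousCore, ← RBop_single]
  exact hI.2 _ (hf n)

theorem homogeneousCore (hI : IsRBIdeal l I) : IsRBIdeal l (homogeneousCore I) :=
  ⟨fun f _ hg => hI.diamond_mem_homogeneousCore f hg,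
    fun _ hf => hI.RBop_mem_homogeneousCore hf⟩

end IsRBIdeal

section RBspan

variable {k : Type*} [CommRing k] {l : k} {S : Set (ℕ →₀ k)}

theorem subset_RBspan : S ⊆ RBspan l S := fun _ hs =>
  Submodule.mem_sInf.mpr fun _ hJ => hJ.2 hs

theorem RBspan_le {J : Submodule k (ℕ →₀ k)} (hJ : IsRBIdeal l J) (hSJ : S ⊆ J) :
    RBspan l S ≤ J :=
  sInf_le ⟨hJ, hSJ⟩

end RBspan

/-- A Rota-Baxter ideal `I` of `Ш_k(k)` is generated (as a Rota-Baxter ideal) by a set of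
homogeneous elements if and only if it is a homogeneous ideal, i.e. contains every
homogeneous component of each of its elements. -/
theorem homogeneous_rb_ideal_iff {k : Type*} [CommRing k] (l : k)
    (I : Submodule k (ℕ →₀ k)) (hI : IsRBIdeal l I) :
    (∃ S : Set (ℕ →₀ k), (∀ s ∈ S, ∃ (i : ℕ) (c : k), s = Finsupp.single i c) ∧
        I = RBspan l S)
    ↔ ∀ f ∈ I, ∀ i : ℕ, Finsupp.single i (f i) ∈ I := by
  constructor
  · rintro ⟨S, hS, rfl⟩
    have hS_core : S ⊆ homogeneousCore (RBspan l S) := fun s hs => by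
      obtain ⟨i, c, rfl⟩ := hS s hs
      exact single_mem_homogeneousCore.mpr (subset_RBspan hs)
    exact fun f hf => RBspan_le hI.homogeneousCore hS_core hf
  · intro h
    set S := {s | (∃ i c, s = single i c) ∧ s ∈ I}
    refine ⟨S, fun s hs => hs.1, le_antisymm (fun f hf => ?_) (RBspan_le hI fun _ hs => hs.2)⟩
    have hf_core : f ∈ homogeneousCore (RBspan l S) := fun i =>
      subset_RBspan ⟨⟨i, f i, rfl⟩, h f hf i⟩
    exact homogeneousCore_le hf_core
end

section
/- Given a non-decreasing sequence of ideals Ω_0 ⊆ Ω_1 ⊆ Ω_2 ⊆ ⋯ of k, the k-submodule I = ⊕_{i ≥ 0} Ω_i a_i of Ш_k(k) is a Rota-Baxter ideal (i.e., an ideal of the ring Ш_k(k) satisfying P(I) ⊆ I). -/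
open Finsupp

section

variable {k : Type*} [CommRing k]

theorem RBop_apply_zero (f : ℕ →₀ k) : RBop f 0 = 0 :=
  Finsupp.mapDomain_of_notMem_range _ _ (by simp)

theorem RBop_apply_succ (f : ℕ →₀ k) (n : ℕ) : RBop f (n + 1) = f n :=
  Finsupp.mapDomain_apply (add_left_injective 1) f n

/-- `a_m ⋄ a_n` is supported in degrees `m + n - i ≥ n`. -/
theorem diamond_apply_mem (l : k) (f g : ℕ →₀ k) {J : Ideal k} {p : ℕ}
    (hg : ∀ n ≤ p, g n ∈ J) : diamond l f g p ∈ J := by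
  simp only [diamond, Finsupp.sum_apply, Finsupp.finsetSum_apply]
  refine Submodule.sum_mem _ fun m _ => Submodule.sum_mem _ fun n _ =>
    Submodule.sum_mem _ fun i hi => ?_
  rcases eq_or_ne (m + n - i) p with rfl | hne
  · have hi : i ≤ m := by rw [Finset.mem_range] at hi; omega
    rw [Finsupp.single_eq_same]
    exact J.mul_mem_right _ <| J.mul_mem_right _ <| J.mul_mem_right _ <|
      J.mul_mem_left _ (hg n (by omega))
  · rw [Finsupp.single_eq_of_ne' hne]
    exact J.zero_mem

/-- The `k`-submodule `⊕ᵢ Wᵢ aᵢ` of `Ш_k(k)`. -/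
def coeffIdealSubmodule (W : ℕ → Ideal k) : Submodule k (ℕ →₀ k) where
  carrier := {f | ∀ i, f i ∈ W i}
  add_mem' hf hg i := (W i).add_mem (hf i) (hg i)
  zero_mem' i := (W i).zero_mem
  smul_mem' c _ hf i := (W i).mul_mem_left c (hf i)

theorem isRBIdeal_coeffIdealSubmodule (l : k) {W : ℕ → Ideal k} (hmono : Monotone W) :
    IsRBIdeal l (coeffIdealSubmodule W) := by
  refine ⟨fun f g hg p => diamond_apply_mem l f g fun n hn => hmono hn (hg n), fun f hf p => ?_⟩
  cases p with
  | zero => simp only [RBop_apply_zero, Submodule.zero_mem]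
  | succ q => simpa only [RBop_apply_succ] using hmono q.le_succ (hf q)

end

/-- Given a non-decreasing sequence of ideals `Ω_0 ⊆ Ω_1 ⊆ ⋯` of `k`, the subset
`⊕_{i ≥ 0} Ω_i a_i` of `Ш_k(k)` is a Rota-Baxter ideal. -/
theorem dirsum_is_rb_ideal {k : Type*} [CommRing k] (l : k) (W : ℕ → Ideal k)
    (hmono : Monotone W) :
    ∃ J : Submodule k (ℕ →₀ k),
      ((J : Set (ℕ →₀ k)) = {f : ℕ →₀ k | ∀ i : ℕ, f i ∈ W i}) ∧ IsRBIdeal l J :=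
  ⟨coeffIdealSubmodule W, rfl, isRBIdeal_coeffIdealSubmodule l hmono⟩
end

section
/- Let k be an integral domain of characteristic 0, I a nonzero Rota-Baxter ideal of Ш_k(k) of weight λ with starting point t (the minimal degree of an initial term of a nonzero element of I), and suppose Ω_t(I) = k·ω_t is principal. If f = Σ_{i=r}^{t} c_i a_i ∈ I with c_t = ω_t and c_r ≠ 0, then c_i = C(t−r, t−i) λ^{t−i} c_t for all r ≤ i ≤ t−1. -/
open Finsupp

lemma RBop_apply {k : Type*} [CommRing k] (f : ℕ →₀ k) (j : ℕ) :
    RBop f j = if j = 0 then 0 else f (j - 1) := by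
  unfold RBop
  cases j with
  | zero =>
    rw [if_pos rfl, Finsupp.mapDomain_notin_range]
    simp
  | succ m =>
    rw [if_neg (Nat.succ_ne_zero m)]
    have : (m + 1 : ℕ) - 1 = m := rfl
    rw [this, ← Finsupp.mapDomain_apply (add_left_injective 1) f m]

lemma diamond_a1_apply {k : Type*} [CommRing k] (l : k) (f : ℕ →₀ k) (j : ℕ) :
    diamond l (aElt 1) f j = (j : k) * f (j - 1) + (j : k) * l * f j := by
  unfold diamond aElt
  rw [Finsupp.sum_single_index (by simp)]
  rw [Finsupp.sum_apply, Finsupp.sum]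
  simp only [Finset.sum_apply', Finsupp.single_apply, one_mul]
  cases j with
  | zero =>
    rw [Nat.cast_zero, zero_mul, zero_mul, zero_mul, add_zero]
    apply Finset.sum_eq_zero
    intro n _
    apply Finset.sum_eq_zero
    intro i hi
    rw [Finset.mem_range] at hi
    rw [if_neg (by omega)]
  | succ j' =>
    have inner : ∀ n ∈ f.support,
        (∑ i ∈ Finset.range (min 1 n + 1),
          if 1 + n - i = j' + 1 then f n * ((1 + n - i).choose 1 : k) * ((Nat.choose 1 i : k)) * l ^ i else 0)
        = (if n = j' then ((j' + 1 : ℕ) : k) * f n else 0)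
          + (if n = j' + 1 then ((j' + 1 : ℕ) : k) * l * f n else 0) := by
      intro n _
      rcases n with _ | m
      · simp only [Nat.min_zero]
        rw [Finset.sum_range_one]
        simp only [Nat.add_zero, Nat.sub_zero, Nat.choose_zero_right, Nat.cast_one, pow_zero, mul_one]
        by_cases h0 : j' = 0
        · subst h0; simp [Nat.choose_one_right]
        · rw [if_neg (by omega), if_neg (by omega), if_neg (by omega)]
          simp
      · have : min 1 (m + 1) = 1 := by omega
        rw [this, Finset.sum_range_succ, Finset.sum_range_one]
        by_cases h1 : m + 1 = j'
        · rw [if_pos (by omega), if_pos h1, if_neg (by omega), if_neg (by omega)]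
          subst h1
          simp [Nat.choose_one_right]
          ring
        · by_cases h2 : m + 1 = j' + 1
          · rw [if_neg (by omega), if_pos (by omega), if_neg h1, if_pos h2]
            have hm : m = j' := by omega
            subst hm
            simp [Nat.choose_one_right]
            try ring
          · rw [if_neg (by omega), if_neg (by omega), if_neg h1, if_neg h2]
    rw [Finset.sum_congr rfl inner, Finset.sum_add_distrib]
    rw [Finset.sum_ite_eq' f.support j' (fun n => ((j' + 1 : ℕ) : k) * f n)]
    rw [Finset.sum_ite_eq' f.support (j' + 1) (fun n => ((j' + 1 : ℕ) : k) * l * f n)]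
    have e1 : (if j' ∈ f.support then ((j' + 1 : ℕ) : k) * f j' else 0) = ((j' + 1 : ℕ) : k) * f j' := by
      split_ifs with h
      · rfl
      · rw [Finsupp.notMem_support_iff.mp h, mul_zero]
    have e2 : (if j' + 1 ∈ f.support then ((j' + 1 : ℕ) : k) * l * f (j' + 1) else 0)
        = ((j' + 1 : ℕ) : k) * l * f (j' + 1) := by
      split_ifs with h
      · rfl
      · rw [Finsupp.notMem_support_iff.mp h, mul_zero]
    rw [e1, e2]
    norm_num

/-- Let `k` be an integral domain of characteristic `0`, `I` a nonzero Rota-Baxter ideal of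
`Ш_k(k)` of weight `l` with starting point `t` and `Ω_t(I) = k·ω` principal. If
`f = Σ_{i=r}^{t} c_i a_i ∈ I` with `c_t = ω` and `c_r ≠ 0`, then
`c_i = C(t−r, t−i) l^{t−i} c_t` for all `r ≤ i ≤ t−1`. -/
theorem coeffs_determined {k : Type*} [CommRing k] [IsDomain k] [CharZero k] (l : k)
    (I : Submodule k (ℕ →₀ k)) (hI : IsRBIdeal l I)
    (t : ℕ) (w : k) (hw : w ≠ 0)
    (hlow : ∀ j : ℕ, j < t → Omega (I : Set (ℕ →₀ k)) j = {0})
    (hprin : Omega (I : Set (ℕ →₀ k)) t = {b : k | ∃ c : k, b = c * w})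
    (r : ℕ) (hr : r ≤ t) (c : ℕ → k) (f : ℕ →₀ k) (hfI : f ∈ I)
    (hf : ∀ i : ℕ, f i = if r ≤ i ∧ i ≤ t then c i else 0)
    (hct : c t = w) (hcr : c r ≠ 0) :
    ∀ i : ℕ, r ≤ i → i < t → c i = ((t - r).choose (t - i) : k) * l ^ (t - i) * c t := by
  set g : ℕ →₀ k := diamond l (aElt 1) f - ((t : k) + 1) • RBop f - (l * (r : k)) • f with hgdef
  have hgI : g ∈ I :=
    Submodule.sub_mem _ (Submodule.sub_mem _ (hI.1 _ _ hfI)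
      (Submodule.smul_mem _ _ (hI.2 _ hfI))) (Submodule.smul_mem _ _ hfI)
  have hgapp : ∀ j : ℕ, g j = (j : k) * f (j - 1) + (j : k) * l * f j
      - ((t : k) + 1) * (if j = 0 then 0 else f (j - 1)) - l * (r : k) * f j := by
    intro j
    rw [hgdef]
    rw [Finsupp.sub_apply, Finsupp.sub_apply, Finsupp.smul_apply, Finsupp.smul_apply,
      smul_eq_mul, smul_eq_mul, diamond_a1_apply, RBop_apply]
  have hftop : ∀ j : ℕ, t < j → f j = 0 := by
    intro j hj
    rw [hf j, if_neg (by omega)]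
  have hgtop : ∀ j : ℕ, t < j → g j = 0 := by
    intro j hj
    rw [hgapp j, if_neg (by omega), hftop j hj]
    by_cases h1 : j = t + 1
    · subst h1
      simp only [Nat.add_sub_cancel]
      push_cast
      ring
    · rw [hftop (j - 1) (by omega)]
      ring
  obtain ⟨cg, hcg⟩ : ∃ cg : k, g t = cg * w := by
    have hmem : g t ∈ Omega (I : Set (ℕ →₀ k)) t := ⟨g, hgI, hgtop, rfl⟩
    rw [hprin] at hmem
    exact hmem
  set g' : ℕ →₀ k := w • g - g t • f with hg'def
  have hg'I : g' ∈ I := Submodule.sub_mem _ (Submodule.smul_mem _ _ hgI)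
    (Submodule.smul_mem _ _ hfI)
  have hg'app : ∀ j : ℕ, g' j = w * g j - g t * f j := by
    intro j
    rw [hg'def, Finsupp.sub_apply, Finsupp.smul_apply, Finsupp.smul_apply, smul_eq_mul, smul_eq_mul]
  have hg'top : ∀ j : ℕ, t ≤ j → g' j = 0 := by
    intro j hj
    rcases eq_or_lt_of_le hj with h | h
    · rw [hg'app, ← h, hf t, if_pos ⟨hr, le_refl t⟩, hct]
      rw [hcg]
      ring
    · rw [hg'app, hgtop j h, hftop j h]
      ring
  have hg'0 : g' = 0 := by
    by_contra hne
    have hsupp : g'.support.Nonempty := Finsupp.support_nonempty_iff.mpr hne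
    set M := g'.support.max' hsupp with hM
    have hMmem : M ∈ g'.support := Finset.max'_mem _ _
    have hMne : g' M ≠ 0 := Finsupp.mem_support_iff.mp hMmem
    have hMlt : M < t := by
      by_contra hle
      exact hMne (hg'top M (by omega))
    have habove : ∀ i, M < i → g' i = 0 := by
      intro i hi
      by_contra hne2
      exact absurd (Finset.le_max' _ i (Finsupp.mem_support_iff.mpr hne2)) (by omega)
    have hmem : g' M ∈ Omega (I : Set (ℕ →₀ k)) M := ⟨g', hg'I, habove, rfl⟩
    rw [hlow M hMlt] at hmem
    exact hMne hmem
  have hlin : ∀ j : ℕ, w * g j = g t * f j := by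
    intro j
    have := hg'app j
    rw [hg'0] at this
    simp only [Finsupp.coe_zero, Pi.zero_apply] at this
    linear_combination -this
  have hgr : g r = 0 := by
    rw [hgapp r]
    rcases Nat.eq_zero_or_pos r with h0 | h0
    · subst h0
      simp
    · rw [if_neg (by omega)]
      have hfr1 : f (r - 1) = 0 := by rw [hf, if_neg (by omega)]
      rw [hfr1, hf r, if_pos ⟨le_refl r, hr⟩]
      ring
  have hgt0 : g t = 0 := by
    have := hlin r
    rw [hgr, mul_zero, hf r, if_pos ⟨le_refl r, hr⟩] at this
    rcases mul_eq_zero.mp this.symm with h | h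
    · exact h
    · exact absurd h hcr
  have hgzero : ∀ j : ℕ, g j = 0 := by
    intro j
    have := hlin j
    rw [hgt0, zero_mul] at this
    rcases mul_eq_zero.mp this with h | h
    · exact absurd h hw
    · exact h
  -- key recursion
  have key : ∀ i : ℕ, r ≤ i → i < t →
      ((t : k) - (i : k)) * c i = l * ((i : k) + 1 - (r : k)) * c (i + 1) := by
    intro i hri hit
    have hg1 := hgzero (i + 1)
    rw [hgapp (i + 1), if_neg (by omega)] at hg1
    simp only [Nat.add_sub_cancel] at hg1
    rw [hf i, if_pos ⟨hri, by omega⟩, hf (i + 1), if_pos ⟨by omega, by omega⟩] at hg1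
    push_cast at hg1 ⊢
    linear_combination -hg1
  have main : ∀ d : ℕ, ∀ i : ℕ, r ≤ i → i + d = t →
      c i = ((t - r).choose d : k) * l ^ d * c t := by
    intro d
    induction d with
    | zero =>
      intro i hri hit
      have : i = t := by omega
      subst this
      simp
    | succ d ih =>
      intro i hri hit
      have hd1 : ((d : k) + 1) ≠ 0 := by
        have : ((d + 1 : ℕ) : k) ≠ 0 := Nat.cast_ne_zero.mpr (Nat.succ_ne_zero d)
        push_cast at this
        exact this
      apply mul_left_cancel₀ hd1
      have hk := key i hri (by omega)
      have hih := ih (i + 1) (by omega) (by omega)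
      have hcast1 : (t : k) - (i : k) = (d : k) + 1 := by
        have : t = i + (d + 1) := by omega
        subst this
        push_cast
        ring
      have hcast2 : (i : k) + 1 - (r : k) = ((i + 1 - r : ℕ) : k) := by
        rw [Nat.cast_sub (by omega : r ≤ i + 1)]
        push_cast
        ring
      have hchoose : (t - r).choose (d + 1) * (d + 1) = (t - r).choose d * (i + 1 - r) := by
        have h1 := Nat.choose_succ_right_eq (t - r) d
        have h2 : t - r - d = i + 1 - r := by omega
        rw [h2] at h1
        exact h1
      calc ((d : k) + 1) * c i = ((t : k) - (i : k)) * c i := by rw [hcast1]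
        _ = l * ((i : k) + 1 - (r : k)) * c (i + 1) := hk
        _ = l * ((i + 1 - r : ℕ) : k) * (((t - r).choose d : k) * l ^ d * c t) := by
            rw [hcast2, hih]
        _ = (((t - r).choose d * (i + 1 - r) : ℕ) : k) * l ^ (d + 1) * c t := by
            push_cast
            ring
        _ = (((t - r).choose (d + 1) * (d + 1) : ℕ) : k) * l ^ (d + 1) * c t := by
            rw [hchoose]
        _ = ((d : k) + 1) * (((t - r).choose (d + 1) : k) * l ^ (d + 1) * c t) := by
            push_cast
            ring
  intro i hri hit
  exact main (t - i) i hri (by omega)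
end

section
/- Let k be an integral domain of characteristic 0 and let Ш_k(k) be the free Rota-Baxter algebra of weight λ = 0. If I is a nonzero Rota-Baxter ideal with starting point t and Ω_t(I) = k·ω_t is principal, then I ⊆ ⊕_{i ≥ t} k a_i, i.e., every f ∈ I lies in the span of {a_i | i ≥ t}. -/
open Finsupp

lemma RBop_succ {k : Type*} [CommRing k] (f : ℕ →₀ k) (n : ℕ) : RBop f (n+1) = f n := by
  unfold RBop
  exact Finsupp.mapDomain_apply (add_left_injective 1) f n

lemma RBop_zero {k : Type*} [CommRing k] (f : ℕ →₀ k) : RBop f 0 = 0 := by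
  unfold RBop
  apply Finsupp.mapDomain_notin_range
  rintro ⟨n, hn⟩
  simp at hn

lemma L_eq {k : Type*} [CommRing k] (f : ℕ →₀ k) :
    diamond (0:k) (aElt 1) f = f.sum fun n cn => Finsupp.single (n+1) (((n:k)+1) * cn) := by
  unfold diamond aElt
  rw [Finsupp.sum_single_index]
  · apply Finsupp.sum_congr
    intro n _
    match n with
    | 0 =>
      rw [show min 1 0 + 1 = 1 by omega, Finset.sum_range_one]
      simp only [pow_zero, mul_one, Nat.choose_zero_right, Nat.cast_one, one_mul,
        Nat.cast_zero, zero_add]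
      rw [show 1 + 0 - 0 = 0 + 1 by omega]
      congr 1
      norm_num
    | m+1 =>
      rw [show min 1 (m+1) + 1 = 2 by omega, Finset.sum_range_succ, Finset.sum_range_one]
      simp only [pow_one, mul_zero, Finsupp.single_zero, add_zero, pow_zero, mul_one,
        Nat.choose_one_right, Nat.choose_zero_right, Nat.cast_one, one_mul]
      rw [show 1 + (m+1) - 0 = m + 1 + 1 by omega]
      congr 1
      push_cast
      ring
  · apply Finset.sum_eq_zero
    intro n _
    apply Finset.sum_eq_zero
    intro i _
    rw [zero_mul, zero_mul, zero_mul, zero_mul, Finsupp.single_zero]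

lemma L_succ {k : Type*} [CommRing k] (f : ℕ →₀ k) (m : ℕ) :
    diamond (0:k) (aElt 1) f (m+1) = ((m:k)+1) * f m := by
  rw [L_eq, Finsupp.sum_apply, Finsupp.sum, Finset.sum_eq_single m]
  · rw [Finsupp.single_eq_same]
  · intro n _ hne
    rw [Finsupp.single_eq_of_ne (by omega)]
  · intro h
    rw [Finsupp.notMem_support_iff.mp h, mul_zero, Finsupp.single_zero]
    rfl

lemma L_zero {k : Type*} [CommRing k] (f : ℕ →₀ k) :
    diamond (0:k) (aElt 1) f 0 = 0 := by
  rw [L_eq, Finsupp.sum_apply, Finsupp.sum]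
  apply Finset.sum_eq_zero
  intro n _
  rw [Finsupp.single_eq_of_ne (by omega)]

/-- From an element of `I` with lowest nonzero coefficient at `i₀` and support bounded
by `N`, produce a nonzero multiple of `a_N` inside `I`. -/
lemma single_top_mem {k : Type*} [CommRing k] [IsDomain k] [CharZero k]
    (I : Submodule k (ℕ →₀ k)) (hI : IsRBIdeal (0 : k) I) :
    ∀ d : ℕ, ∀ f ∈ I, ∀ i₀ N : ℕ, N - i₀ ≤ d → f i₀ ≠ 0 →
      (∀ n, n < i₀ → f n = 0) → (∀ n, N < n → f n = 0) →
      ∃ c : k, c ≠ 0 ∧ Finsupp.single N c ∈ I := by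
  intro d
  induction d with
  | zero =>
    intro f hf i₀ N hd hne hlo hhi
    have hiN : i₀ ≤ N := by
      by_contra h
      exact hne (hhi i₀ (by omega))
    have hEq : i₀ = N := by omega
    subst hEq
    refine ⟨f i₀, hne, ?_⟩
    have : Finsupp.single i₀ (f i₀) = f := by
      ext n
      rcases lt_trichotomy n i₀ with h | h | h
      · rw [Finsupp.single_eq_of_ne (by omega), hlo n h]
      · subst h; rw [Finsupp.single_eq_same]
      · rw [Finsupp.single_eq_of_ne (by omega), hhi n h]
    rwa [this]
  | succ d ih =>
    intro f hf i₀ N hd hne hlo hhi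
    by_cases hle : N - i₀ ≤ d
    · exact ih f hf i₀ N hle hne hlo hhi
    · have hiN : i₀ ≤ N := by
        by_contra h
        exact hne (hhi i₀ (by omega))
      have hi₀N : i₀ < N := by omega
      set u := diamond (0:k) (aElt 1) f - ((N:k)+1) • RBop f with hu_def
      have hu : u ∈ I := I.sub_mem (hI.1 _ _ hf) (I.smul_mem _ (hI.2 f hf))
      have hus : ∀ m, u (m+1) = ((m:k) - (N:k)) * f m := by
        intro m
        rw [hu_def, Finsupp.sub_apply, Finsupp.smul_apply, L_succ, RBop_succ, smul_eq_mul]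
        ring
      have hu0 : u 0 = 0 := by
        rw [hu_def, Finsupp.sub_apply, Finsupp.smul_apply, L_zero, RBop_zero, smul_zero,
          sub_zero]
      refine ih u hu (i₀+1) N (by omega) ?_ ?_ ?_
      · rw [hus]
        apply mul_ne_zero _ hne
        rw [sub_ne_zero]
        exact_mod_cast fun h => (by omega : i₀ ≠ N) (Nat.cast_injective h)
      · intro n hn
        match n with
        | 0 => exact hu0
        | m+1 => rw [hus, hlo m (by omega), mul_zero]
      · intro n hn
        match n with
        | 0 => exact hu0
        | m+1 =>
          rcases eq_or_lt_of_le (show N ≤ m by omega) with h | h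
          · rw [hus, ← h, sub_self, zero_mul]
          · rw [hus, hhi m h, mul_zero]

/-- Elements of `I` supported strictly below `t` vanish. -/
lemma low_support_zero {k : Type*} [CommRing k]
    (I : Submodule k (ℕ →₀ k)) (t : ℕ)
    (hlow : ∀ j : ℕ, j < t → Omega (I : Set (ℕ →₀ k)) j = {0}) :
    ∀ j, j ≤ t → ∀ f ∈ I, (∀ n, j ≤ n → f n = 0) → f = 0 := by
  intro j
  induction j with
  | zero =>
    intro _ f _ hsupp
    ext n
    exact hsupp n (Nat.zero_le n)
  | succ j ih =>
    intro hj f hf hsupp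
    have hfj : f j = 0 := by
      have hmem : f j ∈ Omega (I : Set (ℕ →₀ k)) j :=
        ⟨f, hf, fun i hi => hsupp i (by omega), rfl⟩
      rw [hlow j (by omega)] at hmem
      exact hmem
    refine ih (by omega) f hf ?_
    intro n hn
    rcases eq_or_lt_of_le hn with h | h
    · rw [← h]; exact hfj
    · exact hsupp n (by omega)

/-- Let `k` be an integral domain of characteristic `0` and `Ш_k(k)` of weight `0`. If `I`
is a nonzero Rota-Baxter ideal with starting point `t` and `Ω_t(I) = k·ω` principal, then
`I ⊆ ⊕_{i ≥ t} k a_i`: every element of `I` has zero coefficients in degrees below `t`. -/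
theorem ideal_subset_high_degrees {k : Type*} [CommRing k] [IsDomain k] [CharZero k]
    (I : Submodule k (ℕ →₀ k)) (hI : IsRBIdeal (0 : k) I) (hne : I ≠ ⊥)
    (t : ℕ) (w : k) (hw : w ≠ 0)
    (hlow : ∀ j : ℕ, j < t → Omega (I : Set (ℕ →₀ k)) j = {0})
    (hprin : Omega (I : Set (ℕ →₀ k)) t = {b : k | ∃ c : k, b = c * w}) :
    ∀ f ∈ I, ∀ i : ℕ, i < t → f i = 0 := by
  classical
  suffices H : ∀ N : ℕ, ∀ f ∈ I, (∀ n, N < n → f n = 0) → ∀ i : ℕ, i < t → f i = 0 by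
    intro f hf i hit
    refine H (f.support.sup id) f hf ?_ i hit
    intro n hn
    by_contra h
    have : n ∈ f.support := Finsupp.mem_support_iff.mpr h
    have := Finset.le_sup (f := id) this
    simp only [id] at this
    omega
  intro N
  induction N using Nat.strong_induction_on with
  | _ N ihN =>
    intro f hf hsupp i hit
    by_contra hne0
    rcases lt_or_ge N t with hNt | htN
    · have : f = 0 := by
        refine low_support_zero I t hlow t le_rfl f hf ?_
        intro n hn
        exact hsupp n (by omega)
      rw [this] at hne0
      exact hne0 rfl
    · have hex : ∃ n, f n ≠ 0 := ⟨i, hne0⟩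
      set i₀ := Nat.find hex with hi₀_def
      have hfi₀ : f i₀ ≠ 0 := Nat.find_spec hex
      have hlo : ∀ n, n < i₀ → f n = 0 := by
        intro n hn
        rw [hi₀_def] at hn
        exact not_not.mp (Nat.find_min hex hn)
      obtain ⟨c, hc, hcI⟩ :=
        single_top_mem I hI (N - i₀) f hf i₀ N le_rfl hfi₀ hlo hsupp
      set r := c • f - (f N) • Finsupp.single N c with hr_def
      have hr : r ∈ I := I.sub_mem (I.smul_mem _ hf) (I.smul_mem _ hcI)
      have hrsupp : ∀ n, N - 1 < n → r n = 0 := by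
        intro n hn
        rcases eq_or_lt_of_le (show N ≤ n by omega) with h | h
        · rw [hr_def, Finsupp.sub_apply, Finsupp.smul_apply, Finsupp.smul_apply, ← h,
            Finsupp.single_eq_same, smul_eq_mul, smul_eq_mul]
          ring
        · rw [hr_def, Finsupp.sub_apply, Finsupp.smul_apply, Finsupp.smul_apply,
            hsupp n h, Finsupp.single_eq_of_ne (by omega), smul_zero, smul_zero, sub_zero]
      have hN1 : N - 1 < N := by omega
      have hri : r i = 0 := ihN (N - 1) hN1 r hr hrsupp i hit
      rw [hr_def, Finsupp.sub_apply, Finsupp.smul_apply, Finsupp.smul_apply,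
        Finsupp.single_eq_of_ne (by omega), smul_zero, sub_zero, smul_eq_mul] at hri
      rcases mul_eq_zero.mp hri with h | h
      · exact hc h
      · exact hne0 h
end

section
/- Let I be a proper nonzero Rota-Baxter ideal of Ш_ℤ(ℤ) of weight 0. Then I is a prime ideal if and only if I = pℤ a_0 ⊕ (⊕_{i ≥ 1} ℤ a_i) for some p that is either 0 or a prime number. -/
open Finsupp

section Aux

lemma diamond_single_left (m : ℕ) (c : ℤ) (g : ℕ →₀ ℤ) :
    diamond 0 (Finsupp.single m c) g
      = g.sum fun n cn => Finsupp.single (m + n) (c * cn * ((m + n).choose m : ℤ)) := by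
  rw [diamond, Finsupp.sum_single_index]
  · apply Finsupp.sum_congr
    intro n _
    rw [Finset.sum_eq_single 0]
    · simp
    · intro i _ hi
      simp [zero_pow hi]
    · intro h
      simp at h
  · simp

lemma diamond_single_single (m n : ℕ) (c d : ℤ) :
    diamond 0 (Finsupp.single m c) (Finsupp.single n d)
      = Finsupp.single (m + n) (c * d * ((m + n).choose m : ℤ)) := by
  rw [diamond_single_left, Finsupp.sum_single_index]
  simp

lemma diamond_expand (f g : ℕ →₀ ℤ) :
    diamond 0 f g
      = f.sum fun m cm => g.sum fun n cn =>
          Finsupp.single (m + n) (cm * cn * ((m + n).choose m : ℤ)) := by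
  rw [diamond]
  apply Finsupp.sum_congr
  intro m _
  have := diamond_single_left m (f m) g
  rw [diamond, Finsupp.sum_single_index] at this
  · exact this
  · simp

lemma diamond_apply_zero (f g : ℕ →₀ ℤ) : (diamond 0 f g) 0 = f 0 * g 0 := by
  rw [diamond_expand, Finsupp.sum_apply]
  rw [Finsupp.sum, Finset.sum_eq_single 0]
  · rw [Finsupp.sum_apply, Finsupp.sum, Finset.sum_eq_single 0]
    · simp
    · intro n _ hn
      rw [Finsupp.single_apply, if_neg (by omega)]
    · intro h
      rw [Finsupp.notMem_support_iff] at h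
      simp [h]
  · intro m _ hm
    rw [Finsupp.sum_apply, Finsupp.sum]
    apply Finset.sum_eq_zero
    intro n _
    rw [Finsupp.single_apply, if_neg (by omega)]
  · intro h
    rw [Finsupp.notMem_support_iff] at h
    simp [h]

lemma diamond_one_right (f : ℕ →₀ ℤ) : diamond 0 f (Finsupp.single 0 1) = f := by
  rw [diamond_expand]
  have : ∀ m : ℕ, ∀ cm : ℤ, ((Finsupp.single 0 1 : ℕ →₀ ℤ).sum fun n cn =>
      Finsupp.single (m + n) (cm * cn * ((m + n).choose m : ℤ))) = Finsupp.single m cm := by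
    intro m cm
    rw [Finsupp.sum_single_index (by simp)]
    simp
  rw [Finsupp.sum_congr fun m _ => this m (f m)]
  exact Finsupp.sum_single f

lemma shift_formula (f : ℕ →₀ ℤ) (n : ℕ) :
    diamond 0 (Finsupp.single 1 1) f - ((n : ℤ) + 1) • RBop f
      = f.sum fun i ci => Finsupp.single (i + 1) (ci * ((i : ℤ) - (n : ℤ))) := by
  rw [diamond_single_left, RBop, Finsupp.mapDomain, Finsupp.smul_sum, ← Finsupp.sum_sub]
  apply Finsupp.sum_congr
  intro i _
  rw [Nat.add_comm 1 i, Nat.choose_one_right]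
  rw [Finsupp.smul_single, ← Finsupp.single_sub]
  congr 1
  simp only [smul_eq_mul]
  push_cast
  ring

lemma iso (I : Submodule ℤ (ℕ →₀ ℤ)) (hI : IsRBIdeal 0 I) :
    ∀ N : ℕ, ∀ f : ℕ →₀ ℤ, f.support.card ≤ N → f ∈ I → f ≠ 0 →
      ∃ m : ℕ, ∃ c : ℤ, c ≠ 0 ∧ Finsupp.single m c ∈ I := by
  intro N
  induction N with
  | zero =>
    intro f hcard hfI hf0
    exact absurd (Finsupp.support_eq_empty.mp (Finset.card_eq_zero.mp (Nat.le_zero.mp hcard))) hf0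
  | succ N ih =>
    intro f hcard hfI hf0
    rcases Nat.lt_or_ge f.support.card 2 with hlt | hge
    · have h0 : f.support.card ≠ 0 := by
        simp only [ne_eq, Finset.card_eq_zero, Finsupp.support_eq_empty]
        exact hf0
      have h1 : f.support.card = 1 := by omega
      obtain ⟨a, b, hb, hfs⟩ := Finsupp.card_support_eq_one'.mp h1
      exact ⟨a, b, hb, hfs ▸ hfI⟩
    · have hne : f.support.Nonempty := Finset.card_pos.mp (by omega)
      set n := f.support.max' hne with hn
      set g := diamond 0 (Finsupp.single 1 1) f - ((n : ℤ) + 1) • RBop f with hgdef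
      have hgI : g ∈ I := Submodule.sub_mem I (hI.1 _ f hfI) (Submodule.smul_mem I _ (hI.2 f hfI))
      have hg : g = f.sum fun i ci => Finsupp.single (i + 1) (ci * ((i : ℤ) - (n : ℤ))) :=
        shift_formula f n
      have hgval : ∀ j : ℕ, g (j + 1) = f j * ((j : ℤ) - (n : ℤ)) := by
        intro j
        rw [hg, Finsupp.sum_apply, Finsupp.sum, Finset.sum_eq_single j]
        · simp
        · intro i _ hij
          rw [Finsupp.single_apply, if_neg (by omega)]
        · intro h
          rw [Finsupp.notMem_support_iff] at h
          simp [h]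
      have hmin : f.support.min' hne < n := Finset.min'_lt_max'_of_card _ hge
      set m := f.support.min' hne with hm
      have hfm : f m ≠ 0 := Finsupp.mem_support_iff.mp (f.support.min'_mem hne)
      have hgne : g ≠ 0 := by
        intro h
        have := hgval m
        rw [h] at this
        simp at this
        rcases this with h' | h'
        · exact hfm h'
        · omega
      have hsub : g.support ⊆ (f.support.erase n).image (· + 1) := by
        intro j hj
        have hj' : g j ≠ 0 := Finsupp.mem_support_iff.mp hj
        rw [hg] at hj'
        have : ∃ i ∈ f.support, (Finsupp.single (i + 1) (f i * ((i : ℤ) - n)) : ℕ →₀ ℤ) j ≠ 0 := by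
          by_contra hc
          push_neg at hc
          apply hj'
          rw [Finsupp.sum_apply, Finsupp.sum]
          exact Finset.sum_eq_zero hc
        obtain ⟨i, hi, hine⟩ := this
        rw [Finsupp.single_apply] at hine
        by_cases hij : i + 1 = j
        · subst hij
          simp at hine
          refine Finset.mem_image.mpr ⟨i, Finset.mem_erase.mpr ⟨?_, hi⟩, rfl⟩
          intro h
          subst h
          omega
        · rw [if_neg hij] at hine
          exact absurd rfl hine
      have hgcard : g.support.card ≤ N := by
        calc g.support.card ≤ ((f.support.erase n).image (· + 1)).card := Finset.card_le_card hsub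
          _ ≤ (f.support.erase n).card := Finset.card_image_le
          _ = f.support.card - 1 := Finset.card_erase_of_mem (f.support.max'_mem hne)
          _ ≤ N := by omega
      exact ih g hgcard hgI hgne

section Steps

variable (I : Submodule ℤ (ℕ →₀ ℤ)) (hI : IsRBIdeal (0 : ℤ) I)
variable (hP : ∀ f g : ℕ →₀ ℤ, diamond (0 : ℤ) f g ∈ I → f ∈ I ∨ g ∈ I)
variable (hnot : Finsupp.single 0 (1 : ℤ) ∉ I)

include hI hP hnot in
lemma step3' : ∀ k : ℕ, Finsupp.single k (1 : ℤ) ∈ I → Finsupp.single 1 (1 : ℤ) ∈ I := by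
  intro k
  induction k with
  | zero => intro h; exact absurd h hnot
  | succ k ih =>
    intro hk
    have h1 : Finsupp.single (k + 1) ((k : ℤ) + 1) ∈ I := by
      have := hI.1 (Finsupp.single 0 ((k : ℤ) + 1)) (Finsupp.single (k + 1) 1) hk
      rwa [diamond_single_single, Nat.zero_add, Nat.choose_zero_right,
        Nat.cast_one, mul_one, mul_one] at this
    have h2 : diamond 0 (Finsupp.single 1 (1 : ℤ)) (Finsupp.single k 1)
        = Finsupp.single (k + 1) ((k : ℤ) + 1) := by
      rw [diamond_single_single, Nat.add_comm 1 k, Nat.choose_one_right]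
      push_cast
      ring_nf
    rcases hP _ _ (h2 ▸ h1) with h | h
    · exact h
    · exact ih h

include hI hP hnot in
lemma step2 : ∀ N : ℕ, ∀ c : ℤ, c.natAbs ≤ N → c ≠ 0 →
    Finsupp.single 0 c ∈ I → Finsupp.single 1 (1 : ℤ) ∈ I := by
  intro N
  induction N with
  | zero =>
    intro c hc hc0 _
    exact absurd (Int.natAbs_eq_zero.mp (Nat.le_zero.mp hc)) hc0
  | succ N ih =>
    intro c hc hc0 hcI
    by_cases hu : c.natAbs = 1
    · exfalso
      rcases Int.natAbs_eq_iff.mp hu with h | h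
      · rw [h] at hcI; simp at hcI; exact hnot hcI
      · rw [h] at hcI
        exact hnot (by simpa using Submodule.neg_mem I hcI)
    · obtain ⟨q, hq, d, rfl⟩ : ∃ q, Prime q ∧ ∃ d, c = q * d := by
        obtain ⟨q, hq, hqd⟩ := Int.exists_prime_and_dvd hu
        exact ⟨q, hq, hqd⟩
      have hd0 : d ≠ 0 := by rintro rfl; simp at hc0
      have hq1 : q.natAbs ≠ 1 := by
        intro h
        rcases Int.natAbs_eq_iff.mp h with h | h
        · exact hq.not_unit (h ▸ isUnit_one)
        · exact hq.not_unit (by rw [h]; exact (isUnit_one).neg)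
      have hq0 : q.natAbs ≠ 0 := fun h => hq.ne_zero (Int.natAbs_eq_zero.mp h)
      have hsplit : diamond 0 (Finsupp.single 0 q) (Finsupp.single 0 d)
          = Finsupp.single 0 (q * d) := by
        rw [diamond_single_single]; simp
      rcases hP _ _ (hsplit ▸ hcI) with hqI | hdI
      · -- prime q with q·a₀ ∈ I
        set Q := q.natAbs with hQdef
        have hQ2 : 2 ≤ Q := by omega
        have hQI : Finsupp.single 0 ((Q : ℤ)) ∈ I := by
          rcases Int.natAbs_eq q with h | h
          · rwa [← h]
          · have hthis := Submodule.neg_mem I hqI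
            rw [← Finsupp.single_neg] at hthis
            have e : -q = (Q : ℤ) := by rw [h]; ring
            rwa [e] at hthis
        have hQQ : Finsupp.single Q ((Q : ℤ)) ∈ I := by
          have := hI.1 (Finsupp.single Q (1 : ℤ)) _ hQI
          rwa [diamond_single_single, one_mul, Nat.add_zero, Nat.choose_self,
            Nat.cast_one, mul_one] at this
        have h2 : diamond 0 (Finsupp.single 1 (1 : ℤ)) (Finsupp.single (Q - 1) 1)
            = Finsupp.single Q ((Q : ℤ)) := by
          rw [diamond_single_single]
          have h1Q : 1 + (Q - 1) = Q := by omega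
          rw [h1Q, Nat.choose_one_right]
          simp
        rcases hP _ _ (h2 ▸ hQQ) with h | h
        · exact h
        · exact step3' I hI hP hnot (Q - 1) h
      · refine ih d ?_ hd0 hdI
        have hmul : q.natAbs * d.natAbs ≤ N + 1 := by
          rw [← Int.natAbs_mul]; exact hc
        have hd1 : 1 ≤ d.natAbs := by
          have := Int.natAbs_eq_zero.not.mpr hd0
          omega
        have h2d : 2 * d.natAbs ≤ q.natAbs * d.natAbs :=
          Nat.mul_le_mul_right d.natAbs (by omega)
        omega

include hI hP hnot in
lemma step3 : ∀ k : ℕ, ∀ c : ℤ, c ≠ 0 →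
    Finsupp.single k c ∈ I → Finsupp.single 1 (1 : ℤ) ∈ I := by
  intro k
  induction k with
  | zero => intro c hc0 hcI; exact step2 I hI hP hnot c.natAbs c le_rfl hc0 hcI
  | succ k ih =>
    intro c hc0 hcI
    have h1 : Finsupp.single (k + 1) (((k : ℤ) + 1) * c) ∈ I := by
      have := hI.1 (Finsupp.single 0 ((k : ℤ) + 1)) _ hcI
      rwa [diamond_single_single, Nat.zero_add, Nat.choose_zero_right,
        Nat.cast_one, mul_one] at this
    have h2 : diamond 0 (Finsupp.single 1 (1 : ℤ)) (Finsupp.single k c)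
        = Finsupp.single (k + 1) (((k : ℤ) + 1) * c) := by
      rw [diamond_single_single, Nat.add_comm 1 k, Nat.choose_one_right]
      push_cast
      ring_nf
    rcases hP _ _ (h2 ▸ h1) with h | h
    · exact h
    · exact ih c hc0 h

end Steps

end Aux

/-- A proper nonzero Rota-Baxter ideal `I` of `Ш_ℤ(ℤ)` of weight `0` is prime if and only if
`I = pℤ a_0 ⊕ (⊕_{i ≥ 1} ℤ a_i)`, i.e. `I = {f | p ∣ f 0}`, where `p` is either `0` or a
prime number. -/
theorem prime_rb_ideal_iff (I : Submodule ℤ (ℕ →₀ ℤ)) (hI : IsRBIdeal (0 : ℤ) I)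
    (hbot : I ≠ ⊥) (htop : I ≠ ⊤) :
    (∀ f g : ℕ →₀ ℤ, diamond (0 : ℤ) f g ∈ I → f ∈ I ∨ g ∈ I)
    ↔ ∃ p : ℤ, (p = 0 ∨ Prime p) ∧ ∀ f : ℕ →₀ ℤ, f ∈ I ↔ p ∣ f 0 := by
  constructor
  · intro hP
    have hnot : Finsupp.single 0 (1 : ℤ) ∉ I := by
      intro h
      apply htop
      rw [Submodule.eq_top_iff']
      intro x
      have := hI.1 x _ h
      rwa [diamond_one_right] at this
    obtain ⟨f, hfI, hf0⟩ := (Submodule.ne_bot_iff I).mp hbot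
    obtain ⟨m, c, hc, hmcI⟩ := iso I hI f.support.card f le_rfl hfI hf0
    have ha1 : Finsupp.single 1 (1 : ℤ) ∈ I := step3 I hI hP hnot m c hc hmcI
    have ham : ∀ m : ℕ, Finsupp.single (m + 1) (1 : ℤ) ∈ I := by
      intro m
      induction m with
      | zero => exact ha1
      | succ m ih =>
        have := hI.2 _ ih
        rwa [RBop, Finsupp.mapDomain_single] at this
    have hamc : ∀ m : ℕ, ∀ c : ℤ, Finsupp.single (m + 1) c ∈ I := by
      intro m c
      have := Submodule.smul_mem I c (ham m)
      rwa [Finsupp.smul_single, smul_eq_mul, mul_one] at this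
    have htail : ∀ f : ℕ →₀ ℤ, f 0 = 0 → f ∈ I := by
      intro f hf
      rw [← Finsupp.sum_single f, Finsupp.sum]
      apply Submodule.sum_mem
      intro i hi
      match i with
      | 0 => exact absurd hf (Finsupp.mem_support_iff.mp hi)
      | (m + 1) => exact hamc m _
    have hkey : ∀ f : ℕ →₀ ℤ, f ∈ I ↔ Finsupp.single 0 (f 0) ∈ I := by
      intro f
      have ht : f - Finsupp.single 0 (f 0) ∈ I := htail _ (by simp)
      constructor
      · intro h
        have := Submodule.sub_mem I h ht
        rwa [sub_sub_cancel] at this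
      · intro h
        have := Submodule.add_mem I h ht
        rwa [add_sub_cancel] at this
    set J : Ideal ℤ := Submodule.comap (Finsupp.lsingle 0) I with hJ
    have hJmem : ∀ c : ℤ, c ∈ J ↔ Finsupp.single 0 c ∈ I := by
      intro c
      rw [hJ, Submodule.mem_comap, Finsupp.lsingle_apply]
    obtain ⟨p, hp⟩ := Submodule.IsPrincipal.principal J
    have hpmem : ∀ c : ℤ, Finsupp.single 0 c ∈ I ↔ p ∣ c := by
      intro c
      rw [← hJmem, hp]
      exact Ideal.mem_span_singleton
    have hmemI : ∀ f : ℕ →₀ ℤ, f ∈ I ↔ p ∣ f 0 := fun f => (hkey f).trans (hpmem (f 0))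
    refine ⟨p, ?_, hmemI⟩
    by_cases hp0 : p = 0
    · exact Or.inl hp0
    · refine Or.inr ⟨hp0, ?_, ?_⟩
      · intro hu
        apply hnot
        rw [hpmem]
        exact hu.dvd
      · intro b c hbc
        have h1 : Finsupp.single 0 (b * c) ∈ I := (hpmem _).mpr hbc
        have h2 : diamond 0 (Finsupp.single 0 b) (Finsupp.single 0 c)
            = Finsupp.single 0 (b * c) := by
          rw [diamond_single_single]; simp
        rcases hP _ _ (h2 ▸ h1) with h | h
        · exact Or.inl ((hpmem b).mp h)
        · exact Or.inr ((hpmem c).mp h)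
  · rintro ⟨p, hp, hmem⟩ f g hfg
    rw [hmem, diamond_apply_zero] at hfg
    rw [hmem f, hmem g]
    rcases hp with rfl | hp
    · rcases mul_eq_zero.mp (zero_dvd_iff.mp hfg) with h | h
      · exact Or.inl (zero_dvd_iff.mpr h)
      · exact Or.inr (zero_dvd_iff.mpr h)
    · exact hp.2.2 _ _ hfg
end

section
/- In Ш_ℤ(ℤ) of weight 0, the subset ⊕_{i ≥ 1} ℤ a_i (elements with zero constant term) is a prime Rota-Baxter ideal, and the quotient Ш_ℤ(ℤ)/(⊕_{i≥1} ℤ a_i) is isomorphic to ℤ as a ring. -/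
open Finsupp

lemma diamond_zero_apply (f g : ℕ →₀ ℤ) : (diamond (0 : ℤ) f g) 0 = f 0 * g 0 := by
  classical
  rw [diamond, Finsupp.sum_apply]
  have hterm : ∀ m n : ℕ, ∀ cm cn : ℤ,
      (∑ i ∈ Finset.range (min m n + 1),
        Finsupp.single (m + n - i)
          (cm * cn * ((m + n - i).choose m : ℤ) * ((m.choose i : ℤ)) * (0:ℤ) ^ i)) 0
      = if m = 0 then (if n = 0 then cm * cn else 0) else 0 := by
    intro m n cm cn
    rw [Finset.sum_apply']
    rcases Nat.eq_zero_or_pos (m + n) with h | h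
    · have hm : m = 0 := by omega
      have hn : n = 0 := by omega
      subst hm; subst hn; simp
    · have : ∀ i ∈ Finset.range (min m n + 1),
          (Finsupp.single (m + n - i)
            (cm * cn * ((m + n - i).choose m : ℤ) * ((m.choose i : ℤ)) * (0:ℤ) ^ i)) 0 = 0 := by
        intro i hi
        simp only [Finset.mem_range] at hi
        apply Finsupp.single_eq_of_ne
        omega
      rw [Finset.sum_eq_zero this]
      by_cases hm : m = 0
      · subst hm
        have hn : n ≠ 0 := by omega
        simp [hn]
      · simp [hm]
  have hinner : ∀ m : ℕ, ∀ cm : ℤ,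
      ((g.sum fun n cn => ∑ i ∈ Finset.range (min m n + 1),
        Finsupp.single (m + n - i)
          (cm * cn * ((m + n - i).choose m : ℤ) * ((m.choose i : ℤ)) * (0:ℤ) ^ i)) 0)
      = if m = 0 then cm * g 0 else 0 := by
    intro m cm
    rw [Finsupp.sum_apply]
    rcases Nat.eq_zero_or_pos m with hm | hm
    · subst hm
      simp only [if_pos rfl]
      have := Finsupp.sum_ite_eq' g 0 (fun n cn => cm * cn)
      rw [Finsupp.sum_congr (g2 := fun n cn => if n = 0 then cm * cn else 0)
        (fun n _ => by simpa using hterm 0 n cm (g n)), this]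
      by_cases h0 : (0:ℕ) ∈ g.support
      · simp [h0]
      · rw [if_neg h0]
        rw [Finsupp.notMem_support_iff.mp h0]
        simp
    · rw [Finsupp.sum_congr (g2 := fun n cn => if m = 0 then (if n = 0 then cm * cn else 0) else 0)
        (fun n _ => hterm m n cm (g n))]
      have hm' : m ≠ 0 := by omega
      simp [hm', Finsupp.sum]
  rw [Finsupp.sum_congr (g2 := fun m cm => if m = 0 then cm * g 0 else 0)
    (fun m _ => hinner m (f m))]
  by_cases h0 : (0:ℕ) ∈ f.support
  · rw [Finsupp.sum_ite_eq' f 0 (fun m cm => cm * g 0), if_pos h0]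
  · rw [Finsupp.sum_ite_eq' f 0 (fun m cm => cm * g 0), if_neg h0,
      Finsupp.notMem_support_iff.mp h0]
    simp

/-- In `Ш_ℤ(ℤ)` of weight `0`, the set `⊕_{i ≥ 1} ℤ a_i` of elements with zero constant term
is a prime Rota-Baxter ideal, and the quotient by it is isomorphic to `ℤ` as a ring: the
constant-coefficient map is a surjective multiplicative and unital linear map with this
ideal as kernel. -/
theorem augmentation_ideal_prime :
    IsRBIdeal (0 : ℤ) (LinearMap.ker (Finsupp.lapply 0 : (ℕ →₀ ℤ) →ₗ[ℤ] ℤ))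
    ∧ LinearMap.ker (Finsupp.lapply 0 : (ℕ →₀ ℤ) →ₗ[ℤ] ℤ) ≠ ⊤
    ∧ (∀ f g : ℕ →₀ ℤ,
        diamond (0 : ℤ) f g ∈ LinearMap.ker (Finsupp.lapply 0 : (ℕ →₀ ℤ) →ₗ[ℤ] ℤ) →
          f ∈ LinearMap.ker (Finsupp.lapply 0 : (ℕ →₀ ℤ) →ₗ[ℤ] ℤ) ∨
          g ∈ LinearMap.ker (Finsupp.lapply 0 : (ℕ →₀ ℤ) →ₗ[ℤ] ℤ))
    ∧ (∀ f g : ℕ →₀ ℤ, (diamond (0 : ℤ) f g) 0 = f 0 * g 0)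
    ∧ (aElt 0 : ℕ →₀ ℤ) 0 = 1
    ∧ Function.Surjective (fun f : ℕ →₀ ℤ => f 0) := by
  have key : ∀ f g : ℕ →₀ ℤ, (diamond (0 : ℤ) f g) 0 = f 0 * g 0 := diamond_zero_apply
  refine ⟨⟨fun f g hg => ?_, fun f hf => ?_⟩, ?_, fun f g h => ?_, key, by simp [aElt], fun z => ⟨Finsupp.single 0 z, by simp⟩⟩
  · simp only [LinearMap.mem_ker, Finsupp.lapply_apply] at *
    rw [key, hg, mul_zero]
  · simp only [LinearMap.mem_ker, Finsupp.lapply_apply] at *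
    exact Finsupp.mapDomain_notin_range f 0 (by simp)
  · intro h
    have : (Finsupp.single 0 1 : ℕ →₀ ℤ) ∈ LinearMap.ker (Finsupp.lapply 0 : (ℕ →₀ ℤ) →ₗ[ℤ] ℤ) := h ▸ Submodule.mem_top
    simp at this
  · simp only [LinearMap.mem_ker, Finsupp.lapply_apply] at *
    rw [key] at h
    exact mul_eq_zero.mp h
end

section
/- In Ш_ℤ(ℤ) of weight 0, if a prime Rota-Baxter ideal I contains p a_0 for a prime number p, then a_1 ∈ I; specifically, a_1^p = p! · a_p (iterated product of a_1 with itself p times), which lies in I since p! a_p = (p−1)! P^p(p a_0). -/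
open Finsupp

/-- Iterated `⋄`-power of weight `0`: `dpow f 0 = a_0`, `dpow f (n+1) = f ⋄ dpow f n`. -/
noncomputable def dpow {k : Type*} [CommRing k] (f : ℕ →₀ k) : ℕ → (ℕ →₀ k)
  | 0 => aElt 0
  | n + 1 => diamond (0 : k) f (dpow f n)

section

variable {k : Type*} [CommRing k]

lemma diamond_single_single_s16 (l : k) (m n : ℕ) (cm cn : k) :
    diamond l (single m cm) (single n cn) =
      ∑ i ∈ Finset.range (min m n + 1),
        single (m + n - i) (cm * cn * ((m + n - i).choose m : k) * (m.choose i : k) * l ^ i) := by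
  unfold diamond
  rw [sum_single_index, sum_single_index] <;> simp

/-- In weight `0` only the `i = 0` term of the product formula survives. -/
lemma diamond_zero_single_single (m n : ℕ) (cm cn : k) :
    diamond 0 (single m cm) (single n cn) = single (m + n) (cm * cn * ((m + n).choose m : k)) := by
  rw [diamond_single_single_s16, Finset.sum_eq_single 0]
  · simp
  · intro i _ hi
    simp [zero_pow hi]
  · simp

lemma diamond_aElt_zero (l : k) (f : ℕ →₀ k) : diamond l f (aElt 0) = f := by
  have hterm (m : ℕ) (cm : k) :
      ((single 0 (1 : k)).sum fun n cn => ∑ i ∈ Finset.range (min m n + 1),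
        single (m + n - i) (cm * cn * ((m + n - i).choose m : k) * (m.choose i : k) * l ^ i))
        = single m cm := by
    rw [sum_single_index, Nat.min_zero, Finset.sum_range_one]
    · norm_num
    · simp
  unfold diamond aElt
  simp only [hterm]
  exact sum_single f

lemma dpow_aElt_one (n : ℕ) : dpow (aElt 1 : ℕ →₀ k) n = (n.factorial : k) • aElt n := by
  induction n with
  | zero => simp [dpow]
  | succ n ih =>
    rw [dpow, ih]
    simp only [aElt, smul_single, smul_eq_mul, mul_one, diamond_zero_single_single, one_mul,
      Nat.factorial_succ, Nat.cast_mul, add_comm 1 n, Nat.choose_one_right]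
    rw [mul_comm]

lemma RBop_iterate_smul_aElt (c : k) (m j : ℕ) :
    RBop^[j] (c • aElt m) = c • (aElt (m + j) : ℕ →₀ k) := by
  induction j with
  | zero => simp
  | succ j ih =>
    rw [Function.iterate_succ_apply', ih]
    simp [RBop, aElt, mapDomain_single, Nat.add_assoc]

lemma factorial_smul_aElt_eq {p : ℕ} (hp : p ≠ 0) :
    (p.factorial : k) • (aElt p : ℕ →₀ k) =
      ((p - 1).factorial : k) • RBop^[p] ((p : k) • aElt 0) := by
  rw [RBop_iterate_smul_aElt, zero_add, smul_smul, ← Nat.cast_mul, mul_comm,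
    Nat.mul_factorial_pred hp]

lemma IsRBIdeal.iterate_RBop_mem {l : k} {I : Submodule k (ℕ →₀ k)} (hI : IsRBIdeal l I)
    {f : ℕ →₀ k} (hf : f ∈ I) (j : ℕ) : RBop^[j] f ∈ I := by
  induction j with
  | zero => exact hf
  | succ j ih =>
    rw [Function.iterate_succ_apply']
    exact hI.2 _ ih

/-- Primality peels off one factor `f` at a time; at `n = 0`, `f = f ⋄ a_0 ∈ I`. -/
lemma mem_of_dpow_mem {I : Submodule k (ℕ →₀ k)}
    (hideal : ∀ f g : ℕ →₀ k, g ∈ I → diamond 0 f g ∈ I)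
    (hprime : ∀ f g : ℕ →₀ k, diamond 0 f g ∈ I → f ∈ I ∨ g ∈ I)
    {f : ℕ →₀ k} {n : ℕ} (hn : dpow f n ∈ I) : f ∈ I := by
  induction n with
  | zero =>
    have hf := hideal f _ hn
    rwa [dpow, diamond_aElt_zero] at hf
  | succ n ih => exact (hprime _ _ hn).elim id ih

end

theorem a_one_mem_of_prime_general (I : Submodule ℤ (ℕ →₀ ℤ)) (hI : IsRBIdeal (0 : ℤ) I)
    (hprime : ∀ f g : ℕ →₀ ℤ, diamond (0 : ℤ) f g ∈ I → f ∈ I ∨ g ∈ I)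
    (p : ℕ) (hp : p.Prime) (hpa : (p : ℤ) • (aElt 0 : ℕ →₀ ℤ) ∈ I) :
    dpow (aElt 1 : ℕ →₀ ℤ) p = (p.factorial : ℤ) • (aElt p : ℕ →₀ ℤ)
    ∧ (p.factorial : ℤ) • (aElt p : ℕ →₀ ℤ)
        = ((p - 1).factorial : ℤ) • (RBop^[p] ((p : ℤ) • (aElt 0 : ℕ →₀ ℤ)))
    ∧ dpow (aElt 1 : ℕ →₀ ℤ) p ∈ I
    ∧ (aElt 1 : ℕ →₀ ℤ) ∈ I := by
  have hpow := dpow_aElt_one (k := ℤ) p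
  have hfact := factorial_smul_aElt_eq (k := ℤ) hp.ne_zero
  have hmem : dpow (aElt 1 : ℕ →₀ ℤ) p ∈ I := by
    rw [hpow, hfact]
    exact I.smul_mem _ (hI.iterate_RBop_mem hpa p)
  exact ⟨hpow, hfact, hmem, mem_of_dpow_mem hI.1 hprime hmem⟩

/-- In `Ш_ℤ(ℤ)` of weight `0`, if a prime Rota-Baxter ideal `I` contains `p a_0` for a prime
`p`, then `a_1 ∈ I`; specifically `a_1^p = p! a_p`, which lies in `I` since
`p! a_p = (p−1)! P^p(p a_0)`. -/
theorem a_one_mem_of_prime (I : Submodule ℤ (ℕ →₀ ℤ)) (hI : IsRBIdeal (0 : ℤ) I)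
    (htop : I ≠ ⊤)
    (hprime : ∀ f g : ℕ →₀ ℤ, diamond (0 : ℤ) f g ∈ I → f ∈ I ∨ g ∈ I)
    (p : ℕ) (hp : p.Prime) (hpa : (p : ℤ) • (aElt 0 : ℕ →₀ ℤ) ∈ I) :
    dpow (aElt 1 : ℕ →₀ ℤ) p = (p.factorial : ℤ) • (aElt p : ℕ →₀ ℤ)
    ∧ (p.factorial : ℤ) • (aElt p : ℕ →₀ ℤ)
        = ((p - 1).factorial : ℤ) • (RBop^[p] ((p : ℤ) • (aElt 0 : ℕ →₀ ℤ)))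
    ∧ dpow (aElt 1 : ℕ →₀ ℤ) p ∈ I
    ∧ (aElt 1 : ℕ →₀ ℤ) ∈ I :=
  a_one_mem_of_prime_general I hI hprime p hp hpa
end
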